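/- arXiv:1307.5401 — 2 statements merged into one kernel-verified Lean document; each statement's English description precedes it below -/
import Mathlib

section
/- Let R be a commutative ring with unity such that Γ(R) has at least one vertex (i.e., there exists a proper ideal of R not contained in J(R)). If every vertex of Γ(R) has finite degree — that is, for every proper ideal I of R not contained in J(R), the set of proper ideals J of R with J not contained in J(R) and I + J = R is finite — then R has only finitely many ideals. -/
/-!
If `Γ(R)` has a vertex, `R` is not local, so every maximal ideal `M` is a vertex and the ideals
not contained in `M` (its neighbours, and `⊤`) are finitely many. Hence there are finitely many
maximal ideals and finitely many ideals outside the Jacobson radical. For each maximal `M`, the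
proper finitely generated ideals not contained in `M` form a finite set closed under squaring, so
a minimal one is idempotent, hence generated by an idempotent `e_M ∉ M` with `e_M ≠ 1`. The
`e_M` generate the unit ideal, so `I` is recovered from the ideals `I ⊔ (1 - e_M)`, none of which
lies in the Jacobson radical; this injects the ideals of `R` into a finite set.
-/

namespace Ideal

variable {R : Type*} [CommRing R]

theorem sup_span_one_sub_injective {ι : Type*} {e : ι → R} (he : ∀ i, IsIdempotentElem (e i))
    (hspan : span (Set.range e) = ⊤) :
    Function.Injective fun (I : Ideal R) (i : ι) => I ⊔ span {1 - e i} := by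
  have hle : ∀ I J : Ideal R, (∀ i, I ⊔ span {1 - e i} ≤ J ⊔ span {1 - e i}) → I ≤ J := by
    intro I J h y hy
    -- `y ∈ J ⊔ span {1 - e i}` forces `e i * y ∈ J`.
    have hcolon : span (Set.range e) ≤ J.colon {y} := by
      rw [span_le]
      rintro _ ⟨i, rfl⟩
      obtain ⟨j, hj, z, hz, rfl⟩ := Submodule.mem_sup.mp (h i (Submodule.mem_sup_left hy))
      obtain ⟨t, rfl⟩ := mem_span_singleton'.mp hz
      have hkill : e i * (t * (1 - e i)) = 0 := by linear_combination (-t) * (he i).eq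
      simpa [mul_add, hkill] using J.mul_mem_left (e i) hj
    simpa using hcolon (show (1 : R) ∈ span (Set.range e) by simp [hspan])
  intro I J hIJ
  exact le_antisymm (hle I J fun i => (congrFun hIJ i).le) (hle J I fun i => (congrFun hIJ i).ge)

theorem exists_isIdempotentElem_notMem_of_finite {P : Ideal R} [hP : P.IsPrime]
    (hfin : {J : Ideal R | ¬J ≤ P}.Finite) {x : R} (hxP : x ∉ P) (hx : ¬IsUnit x) :
    ∃ e : R, IsIdempotentElem e ∧ e ∉ P ∧ e ≠ 1 := by
  set S := {N : Ideal R | N.FG ∧ N ≠ ⊤ ∧ ¬N ≤ P}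
  have hxS : span {x} ∈ S :=
    ⟨⟨{x}, by simp⟩, by rwa [Ne, span_singleton_eq_top], by rwa [span_singleton_le_iff_mem]⟩
  obtain ⟨N, -, hN⟩ := (hfin.subset fun N hN => hN.2.2).exists_le_minimal hxS
  obtain ⟨hNfg, hNtop, hNP⟩ := hN.prop
  have hNN : N * N ∈ S :=
    ⟨hNfg.mul hNfg, ne_top_of_le_ne_top hNtop mul_le_left, fun h => by
      rcases hP.mul_le.mp h with h | h <;> exact hNP h⟩
  obtain ⟨e, he, rfl⟩ := (isIdempotentElem_iff_of_fg N hNfg).mp (hN.eq_of_le hNN mul_le_left)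
  exact ⟨e, he, fun h => hNP ((span_singleton_le_iff_mem _).mpr h),
    fun h => hNtop (h ▸ span_singleton_one)⟩

theorem exists_isMaximal_ne_of_not_isLocalRing (hR : ¬IsLocalRing R) {M : Ideal R}
    (hM : M.IsMaximal) : ∃ M' : Ideal R, M'.IsMaximal ∧ M' ≠ M := by
  by_contra! h
  exact hR (.of_unique_max_ideal ⟨M, hM, h⟩)

theorem jacobson_bot_le_of_isMaximal {M : Ideal R} (hM : M.IsMaximal) : jacobson ⊥ ≤ M :=
  sInf_le ⟨bot_le, hM⟩

theorem not_le_jacobson_bot_of_not_isLocalRing (hR : ¬IsLocalRing R) {M : Ideal R}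
    (hM : M.IsMaximal) : ¬M ≤ jacobson ⊥ := fun hle => by
  obtain ⟨M', hM', hne⟩ := exists_isMaximal_ne_of_not_isLocalRing hR hM
  exact hne (hM.eq_of_le hM'.ne_top (hle.trans (jacobson_bot_le_of_isMaximal hM'))).symm

theorem not_isLocalRing_of_not_le_jacobson_bot {I : Ideal R} (hI : I ≠ ⊤)
    (hIJ : ¬I ≤ jacobson ⊥) : ¬IsLocalRing R := fun _ =>
  hIJ ((IsLocalRing.jacobson_eq_maximalIdeal (⊥ : Ideal R) bot_ne_top).symm ▸
    IsLocalRing.le_maximalIdeal hI)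

theorem sup_span_one_sub_not_le_jacobson_bot {e : R} (he : IsIdempotentElem e) (he1 : e ≠ 1)
    (I : Ideal R) : ¬I ⊔ span {1 - e} ≤ jacobson ⊥ := by
  intro hle
  -- a maximal ideal containing `e` cannot contain `1 - e`
  obtain ⟨M, hM, heM⟩ := exists_le_maximal (span {e}) fun h =>
    he1 ((IsIdempotentElem.iff_eq_one_of_isUnit (span_singleton_eq_top.mp h)).mp he)
  have h1 : 1 - e ∈ M := jacobson_bot_le_of_isMaximal hM
    (hle (Submodule.mem_sup_right (mem_span_singleton_self _)))
  exact hM.ne_top ((eq_top_iff_one _).mpr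
    (by simpa using add_mem h1 (heM (mem_span_singleton_self _))))

theorem finite_setOf_isMaximal
    (hfin : ∀ M : Ideal R, M.IsMaximal → {J : Ideal R | ¬J ≤ M}.Finite) :
    {M : Ideal R | M.IsMaximal}.Finite := by
  rcases {M : Ideal R | M.IsMaximal}.eq_empty_or_nonempty with h | ⟨M₀, hM₀⟩
  · simp [h]
  refine ((hfin M₀ hM₀).insert M₀).subset fun M (hM : M.IsMaximal) => ?_
  exact or_iff_not_imp_left.mpr fun hne hle => hne (hM.eq_of_le hM₀.ne_top hle)

theorem finite_setOf_not_le_jacobson_bot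
    (hfin : ∀ M : Ideal R, M.IsMaximal → {J : Ideal R | ¬J ≤ M}.Finite) :
    {J : Ideal R | ¬J ≤ jacobson ⊥}.Finite := by
  refine ((finite_setOf_isMaximal hfin).biUnion fun M hM => hfin M hM).subset fun J hJ => ?_
  obtain ⟨M, hM, hJM⟩ : ∃ M : Ideal R, M.IsMaximal ∧ ¬J ≤ M := by
    by_contra! h
    exact hJ (le_sInf fun M hM => h M hM.2)
  exact Set.mem_biUnion hM hJM

theorem finite_of_not_isLocalRing
    (hfin : ∀ M : Ideal R, M.IsMaximal → {J : Ideal R | ¬J ≤ M}.Finite)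
    (hR : ¬IsLocalRing R) : Finite (Ideal R) := by
  have hidem : ∀ M : {M : Ideal R // M.IsMaximal},
      ∃ e : R, IsIdempotentElem e ∧ e ∉ M.1 ∧ e ≠ 1 := by
    rintro ⟨M, hM⟩
    obtain ⟨M', hM', hne⟩ := exists_isMaximal_ne_of_not_isLocalRing hR hM
    obtain ⟨x, hxM', hxM⟩ := SetLike.not_le_iff_exists.mp fun h => hne (hM'.eq_of_le hM.ne_top h)
    exact exists_isIdempotentElem_notMem_of_finite (hfin M hM) hxM
      fun hu => hM'.ne_top (M'.eq_top_of_isUnit_mem hxM' hu)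
  choose e he heM he1 using hidem
  have hspan : span (Set.range e) = ⊤ := by
    by_contra h
    obtain ⟨M, hM, hle⟩ := exists_le_maximal _ h
    exact heM ⟨M, hM⟩ (hle (subset_span ⟨_, rfl⟩))
  have hmaps I M : I ⊔ span {1 - e M} ∈ {J : Ideal R | ¬J ≤ jacobson ⊥} :=
    sup_span_one_sub_not_le_jacobson_bot (he M) (he1 M) I
  have : Finite {M : Ideal R // M.IsMaximal} := (finite_setOf_isMaximal hfin).to_subtype
  have := (finite_setOf_not_le_jacobson_bot hfin).to_subtype
  exact Finite.of_injective (fun I M => (⟨_, hmaps I M⟩ : {J : Ideal R | ¬J ≤ jacobson ⊥}))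
    fun I J h => sup_span_one_sub_injective he hspan
      (funext fun M => congrArg Subtype.val (congrFun h M))

end Ideal

/-- If the co-maximal ideal graph `Γ(R)` has at least one vertex and every vertex has
finite degree, then `R` has only finitely many ideals. -/
theorem finitely_many_ideals_of_all_degrees_finite
    (R : Type) [CommRing R]
    (hne : ∃ I : Ideal R, I ≠ ⊤ ∧ ¬ I ≤ Ideal.jacobson (⊥ : Ideal R))
    (hdeg : ∀ I : Ideal R, I ≠ ⊤ → ¬ I ≤ Ideal.jacobson (⊥ : Ideal R) →
      {J : Ideal R | J ≠ ⊤ ∧ ¬ J ≤ Ideal.jacobson (⊥ : Ideal R) ∧ I ⊔ J = ⊤}.Finite) :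
    Finite (Ideal R) := by
  obtain ⟨I, hI, hIJ⟩ := hne
  have hR := Ideal.not_isLocalRing_of_not_le_jacobson_bot hI hIJ
  refine Ideal.finite_of_not_isLocalRing (fun M hM => ?_) hR
  have hnbr := hdeg M hM.ne_top (Ideal.not_le_jacobson_bot_of_not_isLocalRing hR hM)
  refine (hnbr.insert ⊤).subset fun J (hJM : ¬J ≤ M) => ?_
  by_cases hJ : J = ⊤
  · exact Or.inl hJ
  · exact Or.inr ⟨hJ, fun h => hJM (h.trans (Ideal.jacobson_bot_le_of_isMaximal hM)),
      hM.out.lt_iff.mp (left_lt_sup.mpr hJM)⟩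
end

section
/- Let R be a commutative ring with unity having four pairwise distinct maximal ideals m₁, m₂, m₃, m₄. Then the six ideals m₁, m₂, m₁m₂, m₃, m₄, m₃m₄ are pairwise distinct proper ideals of R, none of them is contained in J(R), and every ideal in {m₁, m₂, m₁m₂} is comaximal with every ideal in {m₃, m₄, m₃m₄} (the sum of any such pair is R). In particular, these six ideals form a complete bipartite subgraph K₃,₃ in Γ(R). -/
/-! Distinct maximal ideals are comaximal and comaximality survives products, so every ideal
built from `m₁, m₂` is comaximal with every ideal built from `m₃, m₄`. A proper ideal differs
from every ideal comaximal with it, and an ideal comaximal with a proper ideal `J` is not in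
`J(R)`, because `J(R)` lies in any maximal ideal containing `J`. Within one side,
`m₁m₂ ≤ m₂` but `m₁ ≰ m₂`, so `m₁m₂ ≠ m₁`. -/

theorem isCoprime_of_mem_triple_mul {S : Type*} [CommSemiring S] {x a b : S}
    (ha : IsCoprime x a) (hb : IsCoprime x b) : ∀ y ∈ [a, b, a * b], IsCoprime x y := by
  simp only [List.mem_cons, List.not_mem_nil, or_false]
  rintro y (rfl | rfl | rfl)
  exacts [ha, hb, ha.mul_right hb]

namespace Ideal

variable {R : Type*} [CommRing R]

theorem not_le_jacobson_bot_of_sup_eq_top {I J : Ideal R} (hJ : J ≠ ⊤) (h : I ⊔ J = ⊤) :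
    ¬ I ≤ jacobson ⊥ := by
  intro hI
  obtain ⟨m, hm, hJm⟩ := exists_le_maximal J hJ
  have hIm : I ≤ m := hI.trans (sInf_le ⟨bot_le, hm⟩)
  exact hm.ne_top (top_le_iff.mp (h ▸ sup_le hIm hJm))

theorem ne_top_of_mem_triple_mul {a b : Ideal R} (ha : a ≠ ⊤) (hb : b ≠ ⊤) :
    ∀ I ∈ [a, b, a * b], I ≠ ⊤ := by
  simp only [List.mem_cons, List.not_mem_nil, or_false]
  rintro I (rfl | rfl | rfl)
  exacts [ha, hb, ne_top_of_le_ne_top ha mul_le_left]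

theorem IsMaximal.ne_mul_of_ne {a b : Ideal R} (ha : a.IsMaximal) (hb : b.IsMaximal)
    (hab : a ≠ b) : a ≠ a * b :=
  fun h => hab (ha.eq_of_le hb.ne_top (h.le.trans mul_le_right))

theorem IsMaximal.pairwise_ne_triple_mul {a b : Ideal R} (ha : a.IsMaximal) (hb : b.IsMaximal)
    (hab : a ≠ b) : [a, b, a * b].Pairwise (· ≠ ·) := by
  have hba : b ≠ a * b := mul_comm a b ▸ hb.ne_mul_of_ne ha hab.symm
  simp only [List.pairwise_cons, List.mem_cons, List.not_mem_nil, or_false, forall_eq_or_imp,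
    forall_eq, List.Pairwise.nil, IsEmpty.forall_iff, implies_true, and_true]
  exact ⟨⟨hab, ha.ne_mul_of_ne hb hab⟩, hba⟩

end Ideal

open Ideal in
/-- If `R` has four pairwise distinct maximal ideals `m₁, m₂, m₃, m₄`, then the six
ideals `m₁, m₂, m₁m₂, m₃, m₄, m₃m₄` are pairwise distinct proper ideals, none contained
in `J(R)`, and each of `m₁, m₂, m₁m₂` is comaximal with each of `m₃, m₄, m₃m₄`; in
particular they form a `K₃,₃` in `Γ(R)`. -/
theorem four_maximal_ideals_K33
    (R : Type) [CommRing R] (m₁ m₂ m₃ m₄ : Ideal R)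
    (h₁ : m₁.IsMaximal) (h₂ : m₂.IsMaximal) (h₃ : m₃.IsMaximal) (h₄ : m₄.IsMaximal)
    (h₁₂ : m₁ ≠ m₂) (h₁₃ : m₁ ≠ m₃) (h₁₄ : m₁ ≠ m₄)
    (h₂₃ : m₂ ≠ m₃) (h₂₄ : m₂ ≠ m₄) (h₃₄ : m₃ ≠ m₄) :
    ([m₁, m₂, m₁ * m₂, m₃, m₄, m₃ * m₄] : List (Ideal R)).Pairwise (· ≠ ·) ∧
    (∀ I ∈ ([m₁, m₂, m₁ * m₂, m₃, m₄, m₃ * m₄] : List (Ideal R)),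
      I ≠ ⊤ ∧ ¬ I ≤ Ideal.jacobson (⊥ : Ideal R)) ∧
    (∀ I ∈ ([m₁, m₂, m₁ * m₂] : List (Ideal R)),
      ∀ J ∈ ([m₃, m₄, m₃ * m₄] : List (Ideal R)), I ⊔ J = ⊤) := by
  have cop {a b : Ideal R} (ha : a.IsMaximal) (hb : b.IsMaximal) (hab : a ≠ b) :
      IsCoprime a b := isCoprime_iff_sup_eq.mpr (ha.coprime_of_ne hb hab)
  have hsup : ∀ I ∈ [m₁, m₂, m₁ * m₂], ∀ J ∈ [m₃, m₄, m₃ * m₄], I ⊔ J = ⊤ := by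
    intro I hI J hJ
    refine isCoprime_iff_sup_eq.mp (isCoprime_of_mem_triple_mul ?_ ?_ I hI).symm
    · exact (isCoprime_of_mem_triple_mul (cop h₁ h₃ h₁₃) (cop h₁ h₄ h₁₄) J hJ).symm
    · exact (isCoprime_of_mem_triple_mul (cop h₂ h₃ h₂₃) (cop h₂ h₄ h₂₄) J hJ).symm
  have hne_top₁₂ := ne_top_of_mem_triple_mul h₁.ne_top h₂.ne_top
  have hne_top₃₄ := ne_top_of_mem_triple_mul h₃.ne_top h₄.ne_top
  rw [show [m₁, m₂, m₁ * m₂, m₃, m₄, m₃ * m₄] = [m₁, m₂, m₁ * m₂] ++ [m₃, m₄, m₃ * m₄] from rfl,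
    List.pairwise_append, List.forall_mem_append]
  refine ⟨⟨h₁.pairwise_ne_triple_mul h₂ h₁₂, h₃.pairwise_ne_triple_mul h₄ h₃₄, ?_⟩, ⟨?_, ?_⟩, hsup⟩
  · exact fun I hI J hJ hIJ => hne_top₁₂ I hI (by simpa [hIJ] using hsup I hI J hJ)
  · exact fun I hI => ⟨hne_top₁₂ I hI,
      not_le_jacobson_bot_of_sup_eq_top h₃.ne_top (hsup I hI m₃ (by simp))⟩
  · exact fun J hJ => ⟨hne_top₃₄ J hJ,
      not_le_jacobson_bot_of_sup_eq_top h₁.ne_top (sup_comm J m₁ ▸ hsup m₁ (by simp) J hJ)⟩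
end
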